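/- Let s be complex with 0 < Re s ≤ 1 and let σ := Re s. If z → 1 along the real axis from below (z real, 0 < z < 1), then |(z-1) · Li_s(z)| ≤ C · (1-z)^(σ/(1+σ)) for a uniform constant C = 2e^(1/e), for 1-z sufficiently small; in particular (z-1)·Li_s(z) → 0 as z → 1⁻. -/

import Mathlib

/-!
For `0 ≤ z < 1` and `σ = Re s ≥ 0`, bound `|Li_s(z)|` by the series of absolute values and split
that series at `N = ⌊T⌋`: the first `N` terms are at most `1` each, and the tail is at most
`(N + 1)^(-σ) ∑ zⁿ ≤ T^(-σ) / (1 - z)`. Hence `(1 - z) |Li_s(z)| ≤ (1 - z) T + T^(-σ)` for every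
`T > 0`, and the choice `T = (1 - z)^(-1/(1+σ))` balances the two terms, giving
`|(z - 1) Li_s(z)| ≤ 2 (1 - z)^(σ/(1+σ))`. The constant `2 e^(1/e)` is at least `2`.
-/

open Real Filter Topology

section PolylogSeries

variable {z σ : ℝ}

lemma pow_succ_div_rpow_le_of_le (hz : 0 ≤ z) (hσ : 0 ≤ σ) {k n : ℕ} (hkn : k ≤ n) :
    z ^ (n + 1) / ((n : ℝ) + 1) ^ σ ≤ z ^ (n + 1) / ((k : ℝ) + 1) ^ σ := by
  gcongr

lemma pow_succ_div_rpow_le (hz : 0 ≤ z) (hσ : 0 ≤ σ) (n : ℕ) :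
    z ^ (n + 1) / ((n : ℝ) + 1) ^ σ ≤ z ^ (n + 1) := by
  simpa using pow_succ_div_rpow_le_of_le hz hσ (Nat.zero_le n)

lemma summable_pow_succ_div_rpow (hz0 : 0 ≤ z) (hz1 : z < 1) (hσ : 0 ≤ σ) :
    Summable fun n : ℕ => z ^ (n + 1) / ((n : ℝ) + 1) ^ σ :=
  .of_nonneg_of_le (fun _ => by positivity) (pow_succ_div_rpow_le hz0 hσ)
    ((summable_geometric_of_lt_one hz0 hz1).comp_injective (add_left_injective 1))

lemma tsum_pow_succ_div_rpow_le (hz0 : 0 ≤ z) (hz1 : z < 1) (hσ : 0 ≤ σ) (N : ℕ) :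
    ∑' n : ℕ, z ^ (n + 1) / ((n : ℝ) + 1) ^ σ ≤ N + (1 - z)⁻¹ / ((N : ℝ) + 1) ^ σ := by
  set f : ℕ → ℝ := fun n => z ^ (n + 1) / ((n : ℝ) + 1) ^ σ
  have hf : Summable f := summable_pow_succ_div_rpow hz0 hz1 hσ
  have head : ∑ i ∈ Finset.range N, f i ≤ N := by
    have := Finset.sum_le_card_nsmul (Finset.range N) f 1 fun i _ =>
      (pow_succ_div_rpow_le hz0 hσ i).trans (pow_le_one₀ hz0 hz1.le)
    simpa using this
  have tail_le : ∀ n, f (n + N) ≤ z ^ n / ((N : ℝ) + 1) ^ σ := fun n =>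
    calc f (n + N) ≤ z ^ (n + N + 1) / ((N : ℝ) + 1) ^ σ :=
          pow_succ_div_rpow_le_of_le hz0 hσ (Nat.le_add_left N n)
      _ ≤ z ^ n / ((N : ℝ) + 1) ^ σ := by
          gcongr ?_ / _
          exact pow_le_pow_of_le_one hz0 hz1.le (by omega)
  have tail : ∑' n, f (n + N) ≤ (1 - z)⁻¹ / ((N : ℝ) + 1) ^ σ := by
    rw [← tsum_geometric_of_lt_one hz0 hz1, ← tsum_div_const]
    exact (hf.comp_injective (add_left_injective N)).tsum_le_tsum tail_le
      ((summable_geometric_of_lt_one hz0 hz1).div_const _)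
  rw [← hf.sum_add_tsum_nat_add N]
  exact add_le_add head tail

lemma one_sub_mul_tsum_pow_succ_div_rpow_le (hz0 : 0 ≤ z) (hz1 : z < 1) (hσ : 0 ≤ σ)
    {T : ℝ} (hT : 0 < T) :
    (1 - z) * ∑' n : ℕ, z ^ (n + 1) / ((n : ℝ) + 1) ^ σ ≤ (1 - z) * T + T ^ (-σ) := by
  set N := ⌊T⌋₊
  have hδ : 0 < 1 - z := sub_pos.mpr hz1
  have hNT : (N : ℝ) ≤ T := Nat.floor_le hT.le
  have hTN : T ≤ (N : ℝ) + 1 := (Nat.lt_floor_add_one T).le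
  have hpow : ((N : ℝ) + 1) ^ (-σ) ≤ T ^ (-σ) :=
    rpow_le_rpow_of_nonpos hT hTN (neg_nonpos.mpr hσ)
  calc (1 - z) * ∑' n : ℕ, z ^ (n + 1) / ((n : ℝ) + 1) ^ σ
      ≤ (1 - z) * (N + (1 - z)⁻¹ / ((N : ℝ) + 1) ^ σ) := by
        gcongr
        exact tsum_pow_succ_div_rpow_le hz0 hz1 hσ N
    _ = (1 - z) * N + ((N : ℝ) + 1) ^ (-σ) := by
        rw [rpow_neg (by positivity)]
        field_simp
    _ ≤ (1 - z) * T + T ^ (-σ) := by gcongr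

lemma one_sub_mul_tsum_pow_succ_div_rpow_le_two_mul (hz0 : 0 ≤ z) (hz1 : z < 1) (hσ : 0 ≤ σ) :
    (1 - z) * ∑' n : ℕ, z ^ (n + 1) / ((n : ℝ) + 1) ^ σ ≤ 2 * (1 - z) ^ (σ / (1 + σ)) := by
  have hδ : 0 < 1 - z := sub_pos.mpr hz1
  have hσ' : 1 + σ ≠ 0 := by positivity
  set T := (1 - z) ^ (-(1 / (1 + σ)))
  have hlinear : (1 - z) * T = (1 - z) ^ (σ / (1 + σ)) := by
    rw [← rpow_one (1 - z), ← rpow_add hδ, rpow_one]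
    congr 1
    field_simp
    ring
  have hpower : T ^ (-σ) = (1 - z) ^ (σ / (1 + σ)) := by
    rw [← rpow_mul hδ.le]
    congr 1
    field_simp
  calc _ ≤ (1 - z) * T + T ^ (-σ) :=
        one_sub_mul_tsum_pow_succ_div_rpow_le hz0 hz1 hσ (rpow_pos_of_pos hδ _)
    _ = 2 * (1 - z) ^ (σ / (1 + σ)) := by rw [hlinear, hpower]; ring

end PolylogSeries

lemma norm_pow_succ_div_natCast_add_one_cpow (w s : ℂ) (n : ℕ) :
    ‖w ^ (n + 1) / ((n : ℂ) + 1) ^ s‖ = ‖w‖ ^ (n + 1) / ((n : ℝ) + 1) ^ s.re := by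
  rw [norm_div, norm_pow, ← Nat.cast_add_one, Complex.norm_natCast_cpow_of_pos n.succ_pos,
    Nat.cast_add_one]

lemma norm_tsum_polylog_le {w : ℂ} (hw : ‖w‖ < 1) {s : ℂ} (hs : 0 ≤ s.re) :
    ‖∑' n : ℕ, w ^ (n + 1) / ((n : ℂ) + 1) ^ s‖ ≤
      ∑' n : ℕ, ‖w‖ ^ (n + 1) / ((n : ℝ) + 1) ^ s.re := by
  simp_rw [← norm_pow_succ_div_natCast_add_one_cpow]
  refine norm_tsum_le_tsum_norm ?_
  simp_rw [norm_pow_succ_div_natCast_add_one_cpow]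
  exact summable_pow_succ_div_rpow (norm_nonneg w) hw hs

lemma norm_sub_one_mul_polylog_le {z : ℝ} (hz0 : 0 ≤ z) (hz1 : z < 1) {s : ℂ} (hs : 0 ≤ s.re) :
    ‖((z : ℂ) - 1) * ∑' n : ℕ, (z : ℂ) ^ (n + 1) / ((n : ℂ) + 1) ^ s‖ ≤
      2 * (1 - z) ^ (s.re / (1 + s.re)) := by
  have hnorm_z : ‖(z : ℂ)‖ = z := by simp [abs_of_nonneg hz0]
  have hnorm_sub : ‖(z : ℂ) - 1‖ = 1 - z := by
    rw [← Complex.ofReal_one, ← Complex.ofReal_sub, Complex.norm_real, norm_sub_rev,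
      Real.norm_of_nonneg (by linarith)]
  rw [norm_mul, hnorm_sub]
  calc (1 - z) * ‖∑' n : ℕ, (z : ℂ) ^ (n + 1) / ((n : ℂ) + 1) ^ s‖
      ≤ (1 - z) * ∑' n : ℕ, z ^ (n + 1) / ((n : ℝ) + 1) ^ s.re := by
        refine mul_le_mul_of_nonneg_left ?_ (by linarith)
        have h := norm_tsum_polylog_le (w := (z : ℂ)) (by rwa [hnorm_z]) hs
        simpa only [hnorm_z] using h
    _ ≤ 2 * (1 - z) ^ (s.re / (1 + s.re)) :=
        one_sub_mul_tsum_pow_succ_div_rpow_le_two_mul hz0 hz1 hs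

theorem polylog_times_z_sub_one_bound :
    ∃ C ε₀ : ℝ, C = 2 * Real.exp 1 ^ (1 / Real.exp 1) ∧ 0 < ε₀ ∧
      (∀ (s : ℂ) (z : ℝ), 0 < s.re → s.re ≤ 1 → 0 < z → z < 1 → 1 - z < ε₀ →
        ‖((z : ℂ) - 1) * ∑' n : ℕ, (z : ℂ) ^ (n + 1) / ((n : ℂ) + 1) ^ s‖ ≤
          C * (1 - z) ^ (s.re / (1 + s.re))) ∧
      ∀ s : ℂ, 0 < s.re → s.re ≤ 1 →
        Filter.Tendsto
          (fun z : ℝ => ((z : ℂ) - 1) * ∑' n : ℕ, (z : ℂ) ^ (n + 1) / ((n : ℂ) + 1) ^ s)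
          (nhdsWithin 1 (Set.Iio 1)) (nhds 0) := by
  have hC : 2 ≤ 2 * Real.exp 1 ^ (1 / Real.exp 1) := by
    have : 1 ≤ Real.exp 1 ^ (1 / Real.exp 1) :=
      one_le_rpow (one_le_exp zero_le_one) (by positivity)
    linarith
  refine ⟨_, 1, rfl, one_pos, fun s z hs _ hz0 hz1 _ => ?_, fun s hs _ => ?_⟩
  · exact (norm_sub_one_mul_polylog_le hz0.le hz1 hs.le).trans
      (by gcongr)
  · have hp : 0 < s.re / (1 + s.re) := by positivity
    have hbound : Tendsto (fun z : ℝ => 2 * (1 - z) ^ (s.re / (1 + s.re)))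
        (𝓝[<] 1) (𝓝 0) := by
      have : ContinuousAt (fun z : ℝ => 2 * (1 - z) ^ (s.re / (1 + s.re))) 1 :=
        ((continuousAt_const.sub continuousAt_id).rpow_const (Or.inr hp.le)).const_mul 2
      simpa [zero_rpow hp.ne'] using this.tendsto.mono_left nhdsWithin_le_nhds
    refine squeeze_zero_norm' ?_ hbound
    filter_upwards [Ioo_mem_nhdsLT zero_lt_one] with z hz
    exact norm_sub_one_mul_polylog_le hz.1.le hz.2 hs.le
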